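/- Let π_ref be a joint distribution over pairs of tokens (y¹, y²) ∈ V × V and r a reward on partial sequences. Define π_{RLHF,1}(y¹) ∝ π_ref(y¹)·exp(β·r(y¹)) and π_{RLHF,2}(y¹,y²) ∝ π_ref(y¹,y²)·exp(β·r(y¹,y²)). Then the marginal of π_{RLHF,2} over y² equals π_{RLHF,1} for all choices of r if and only if the quantity Σ_{y²} π_ref(y² | y¹)·exp(β·(r(y¹,y²) − r(y¹))) is constant in y¹ (for every such r this constancy is required); in particular there exist π_ref and r, β > 0 for which the marginal of π_{RLHF,2} does not equal π_{RLHF,1}. -/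
import Mathlib


/-- For a strictly positive joint reference distribution on `V × V`,
the marginal of the length-2 RLHF policy equals the length-1 RLHF policy for all
rewards iff the expected conditional tilt `Σ_{y²} π_ref(y²|y¹)·exp(β(r(y¹,y²)−r(y¹)))`
is constant in `y¹` for every reward; moreover there exist a reference
distribution, rewards and `β > 0` for which the marginal differs from the
length-1 policy. -/
theorem stmt_5 (V : Type) [Fintype V] (hV : 2 ≤ Fintype.card V) :
    (∀ (πref : V × V → ℝ), (∀ p, 0 < πref p) → (∑ p, πref p) = 1 →
      ∀ β : ℝ, 0 < β →
      ((∀ (r1 : V → ℝ) (r2 : V × V → ℝ) (y1 : V),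
          (∑ y2, πref (y1, y2) * Real.exp (β * r2 (y1, y2)) /
            ∑ p, πref p * Real.exp (β * r2 p)) =
          (∑ y2, πref (y1, y2)) * Real.exp (β * r1 y1) /
            ∑ y1', (∑ y2, πref (y1', y2)) * Real.exp (β * r1 y1')) ↔
        (∀ (r1 : V → ℝ) (r2 : V × V → ℝ), ∃ c : ℝ, ∀ y1 : V,
          (∑ y2, (πref (y1, y2) / ∑ y2', πref (y1, y2')) *
            Real.exp (β * (r2 (y1, y2) - r1 y1))) = c))) ∧
    (∃ (πref : V × V → ℝ), (∀ p, 0 < πref p) ∧ (∑ p, πref p) = 1 ∧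
      ∃ β : ℝ, 0 < β ∧ ∃ (r1 : V → ℝ) (r2 : V × V → ℝ) (y1 : V),
        (∑ y2, πref (y1, y2) * Real.exp (β * r2 (y1, y2)) /
          ∑ p, πref p * Real.exp (β * r2 p)) ≠
        (∑ y2, πref (y1, y2)) * Real.exp (β * r1 y1) /
          ∑ y1', (∑ y2, πref (y1', y2)) * Real.exp (β * r1 y1')) := by
  constructor
  · intro πref hpos hsum β hβ
    have hne : Nonempty V := Fintype.card_pos_iff.mp (by omega)
    have hmpos : ∀ y1 : V, 0 < ∑ y2, πref (y1, y2) :=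
      fun y1 => Finset.sum_pos (fun y2 _ => hpos _) Finset.univ_nonempty
    -- key identity
    have hN : ∀ (r1 : V → ℝ) (r2 : V × V → ℝ) (y1 : V),
        (∑ y2, πref (y1, y2) * Real.exp (β * r2 (y1, y2))) =
        (∑ y2, πref (y1, y2)) * Real.exp (β * r1 y1) *
          (∑ y2, (πref (y1, y2) / ∑ y2', πref (y1, y2')) *
            Real.exp (β * (r2 (y1, y2) - r1 y1))) := by
      intro r1 r2 y1
      rw [Finset.mul_sum]
      refine Finset.sum_congr rfl fun y2 _ => ?_
      have hE : Real.exp (β * (r2 (y1, y2) - r1 y1)) =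
          Real.exp (β * r2 (y1, y2)) / Real.exp (β * r1 y1) := by
        rw [← Real.exp_sub]; ring_nf
      rw [hE]
      field_simp [(hmpos y1).ne']
    have hSpos : ∀ (r1 : V → ℝ) (r2 : V × V → ℝ) (y1 : V),
        0 < ∑ y2, (πref (y1, y2) / ∑ y2', πref (y1, y2')) *
            Real.exp (β * (r2 (y1, y2) - r1 y1)) :=
      fun r1 r2 y1 => Finset.sum_pos (fun y2 _ => mul_pos (div_pos (hpos _) (hmpos _)) (Real.exp_pos _)) Finset.univ_nonempty
    have hZ1pos : ∀ (r1 : V → ℝ),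
        0 < ∑ y1', (∑ y2, πref (y1', y2)) * Real.exp (β * r1 y1') :=
      fun r1 => Finset.sum_pos (fun y1' _ => mul_pos (hmpos _) (Real.exp_pos _)) Finset.univ_nonempty
    have hZ2pos : ∀ (r2 : V × V → ℝ), 0 < ∑ p, πref p * Real.exp (β * r2 p) :=
      fun r2 => Finset.sum_pos (fun p _ => mul_pos (hpos _) (Real.exp_pos _)) Finset.univ_nonempty
    have hZ2split : ∀ (r2 : V × V → ℝ), (∑ p, πref p * Real.exp (β * r2 p)) =
        ∑ y1, ∑ y2, πref (y1, y2) * Real.exp (β * r2 (y1, y2)) :=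
      fun r2 => Fintype.sum_prod_type _
    constructor
    · intro hA r1 r2
      refine ⟨(∑ p, πref p * Real.exp (β * r2 p)) /
        (∑ y1', (∑ y2, πref (y1', y2)) * Real.exp (β * r1 y1')), fun y1 => ?_⟩
      have h := hA r1 r2 y1
      rw [← Finset.sum_div, hN r1 r2] at h
      have hE : (0:ℝ) < (∑ y2, πref (y1, y2)) * Real.exp (β * r1 y1) := mul_pos (hmpos _) (Real.exp_pos _)
      rw [div_eq_div_iff (hZ2pos r2).ne' (hZ1pos r1).ne'] at h
      rw [eq_div_iff (hZ1pos r1).ne']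
      apply mul_left_cancel₀ hE.ne'
      rw [← mul_assoc]
      linarith [h]
    · intro hB r1 r2 y1
      obtain ⟨c, hc⟩ := hB r1 r2
      have hcpos : 0 < c := hc y1 ▸ hSpos r1 r2 y1
      have hZ2 : (∑ p, πref p * Real.exp (β * r2 p)) =
          c * ∑ y1', (∑ y2, πref (y1', y2)) * Real.exp (β * r1 y1') := by
        rw [hZ2split, Finset.mul_sum]
        refine Finset.sum_congr rfl fun y1' _ => ?_
        rw [hN r1 r2 y1', hc y1']; ring
      rw [← Finset.sum_div, hN r1 r2 y1, hc y1, hZ2]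
      rw [mul_comm c]
      exact mul_div_mul_right _ _ hcpos.ne'
  · classical
    obtain ⟨a, b, hab⟩ := Fintype.exists_pair_of_one_lt_card (by omega : 1 < Fintype.card V)
    set n : ℝ := (Fintype.card V : ℝ) with hn
    have hn2 : (2:ℝ) ≤ n := by rw [hn]; exact_mod_cast hV
    have hn0 : 0 < n := by linarith
    have he : (1:ℝ) < Real.exp 1 := by
      have := Real.add_one_le_exp 1; linarith
    refine ⟨fun _ => (n * n)⁻¹, fun p => by positivity, ?_, 1, one_pos,
      fun _ => 0, fun p => if p = (a, a) then 1 else 0, a, ?_⟩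
    · rw [Finset.sum_const, Finset.card_univ, Fintype.card_prod, nsmul_eq_mul]
      push_cast
      rw [← hn]
      field_simp
    · have hm : (∑ _y2 : V, ((n*n)⁻¹ : ℝ)) = n⁻¹ := by
        rw [Finset.sum_const, Finset.card_univ, nsmul_eq_mul, ← hn]
        field_simp
      have hLnum : (∑ y2, ((n*n)⁻¹ : ℝ) * Real.exp (if ((a, y2) : V × V) = (a, a) then (1:ℝ) else 0))
          = (n*n)⁻¹ * (Real.exp 1 - 1 + n) := by
        rw [← Finset.mul_sum]
        congr 1
        have h1 : ∀ y2 : V, Real.exp (if ((a, y2) : V × V) = (a, a) then (1:ℝ) else 0)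
            = (if y2 = a then Real.exp 1 - 1 else 0) + 1 := by
          intro y2
          simp only [Prod.mk.injEq, true_and]
          split <;> simp
        rw [Finset.sum_congr rfl fun y2 _ => h1 y2, Finset.sum_add_distrib,
          Finset.sum_ite_eq' Finset.univ a fun _ => Real.exp 1 - 1]
        simp [hn]
      have hZ2 : (∑ p : V × V, ((n*n)⁻¹ : ℝ) * Real.exp (if p = (a, a) then (1:ℝ) else 0))
          = (n*n)⁻¹ * (Real.exp 1 - 1 + n * n) := by
        rw [← Finset.mul_sum]
        congr 1
        have h1 : ∀ p : V × V, Real.exp (if p = (a, a) then (1:ℝ) else 0)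
            = (if p = (a, a) then Real.exp 1 - 1 else 0) + 1 := by
          intro p; split <;> simp
        rw [Finset.sum_congr rfl fun p _ => h1 p, Finset.sum_add_distrib,
          Finset.sum_ite_eq' Finset.univ (a, a) fun _ => Real.exp 1 - 1]
        simp [hn, Fintype.card_prod]
      have hden : (∑ _y1' : V, (n⁻¹ : ℝ)) = 1 := by
        rw [Finset.sum_const, Finset.card_univ, nsmul_eq_mul, ← hn]
        field_simp
      simp only [one_mul, mul_zero, Real.exp_zero, mul_one]
      rw [← Finset.sum_div, hLnum, hZ2, hm, hden, div_one]
      have h1 : (0:ℝ) < Real.exp 1 - 1 + n * n := by nlinarith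
      rw [mul_div_mul_left _ _ (by positivity : ((n*n)⁻¹:ℝ) ≠ 0)]
      intro h
      rw [div_eq_iff h1.ne'] at h
      have hx : (n - 1) * (Real.exp 1 - 1) = 0 := by
        field_simp at h
        nlinarith [h]
      nlinarith
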